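/- Let X be a topological space with a countable network and weight strictly less than 𝔟. Then X is H-nw-selective if and only if |X| < 𝔟. -/

import Mathlib

open Set Filter Topology TopologicalSpace

def IsNetwork (X : Type) [TopologicalSpace X] (N : Set (Set X)) : Prop :=
  ∀ (x : X) (U : Set X), IsOpen U → x ∈ U → ∃ A ∈ N, x ∈ A ∧ A ⊆ U

def IsNetworkAt (X : Type) [TopologicalSpace X] (N : Set (Set X)) (x : X) : Prop :=
  ∀ U : Set X, IsOpen U → x ∈ U → ∃ A ∈ N, x ∈ A ∧ A ⊆ U

def HasCountableNetwork (X : Type) [TopologicalSpace X] : Prop :=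
  ∃ N : Set (Set X), N.Countable ∧ IsNetwork X N

def MNwSelective (X : Type) [TopologicalSpace X] : Prop :=
  HasCountableNetwork X ∧
  ∀ N : ℕ → Set (Set X), (∀ n, (N n).Countable ∧ IsNetwork X (N n)) →
    ∃ F : ℕ → Set (Set X), (∀ n, F n ⊆ N n ∧ (F n).Finite) ∧
      IsNetwork X (⋃ n, F n)

def RNwSelective (X : Type) [TopologicalSpace X] : Prop :=
  HasCountableNetwork X ∧
  ∀ N : ℕ → Set (Set X), (∀ n, (N n).Countable ∧ IsNetwork X (N n)) →
    ∃ s : ℕ → Set X, (∀ n, s n ∈ N n) ∧ IsNetwork X (Set.range s)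

def HNwSelective (X : Type) [TopologicalSpace X] : Prop :=
  HasCountableNetwork X ∧
  ∀ N : ℕ → Set (Set X), (∀ n, (N n).Countable ∧ IsNetwork X (N n)) →
    ∃ F : ℕ → Set (Set X), (∀ n, F n ⊆ N n ∧ (F n).Finite) ∧
      ∀ (x : X) (U : Set X), IsOpen U → x ∈ U →
        ∃ k : ℕ, ∀ n ≥ k, ∃ A ∈ F n, x ∈ A ∧ A ⊆ U

noncomputable def dominatingNumber : Cardinal :=
  sInf {c | ∃ D : Set (ℕ → ℕ), Cardinal.mk D = c ∧
    ∀ g : ℕ → ℕ, ∃ f ∈ D, ∀ᶠ n in atTop, g n ≤ f n}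

noncomputable def boundingNumber : Cardinal :=
  sInf {c | ∃ B : Set (ℕ → ℕ), Cardinal.mk B = c ∧
    ∀ g : ℕ → ℕ, ∃ f ∈ B, ¬ (∀ᶠ n in atTop, f n ≤ g n)}

noncomputable def covMeager : Cardinal :=
  sInf {c | ∃ S : Set (Set ℝ), Cardinal.mk S = c ∧ (∀ s ∈ S, IsMeagre s) ∧ ⋃₀ S = Set.univ}

noncomputable def weight' (X : Type) [TopologicalSpace X] : Cardinal :=
  sInf {c | ∃ B : Set (Set X), Cardinal.mk B = c ∧ TopologicalSpace.IsTopologicalBasis B}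

/-!
If `|X| < 𝔟` and `w(X) < 𝔟`, fix a base `𝔅` and enumerate each network `𝒩ₙ`. Every pair
`x ∈ B ∈ 𝔅` gives the function sending `n` to the index of some member of `𝒩ₙ` lying between
`x` and `B`. There are fewer than `𝔟` such functions, so a single `g` eventually dominates them
all, and the members of `𝒩ₙ` with index at most `g n` form the selection.

Conversely, index an unbounded family `(f_x)` of size `𝔟` by points of `X`, and set
`S n j = {x | j ≤ f_x n}`. Removing the sets `S n j` from the members of a countable network
gives networks `𝒩ₙ` whose members each miss some `S n j`. A finite selection from `𝒩ₙ` therefore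
misses some `S n (g n)`, and if it eventually covers `x`, then `f_x ≤* g`.
-/

open Cardinal

theorem exists_unbounded_mk_eq_boundingNumber :
    ∃ B : Set (ℕ → ℕ), #B = boundingNumber ∧
      ∀ g : ℕ → ℕ, ∃ f ∈ B, ¬ ∀ᶠ n in atTop, f n ≤ g n := by
  refine csInf_mem (s := {c | ∃ B : Set (ℕ → ℕ), #B = c ∧
    ∀ g : ℕ → ℕ, ∃ f ∈ B, ¬ ∀ᶠ n in atTop, f n ≤ g n})
    ⟨_, univ, rfl, fun g => ⟨g + 1, mem_univ _, fun h => ?_⟩⟩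
  obtain ⟨n, hn⟩ := h.exists
  exact (Nat.lt_succ_self (g n)).not_ge hn

theorem exists_eventually_le_of_mk_lt_boundingNumber {ι : Type} (f : ι → ℕ → ℕ)
    (hι : #ι < boundingNumber) : ∃ g : ℕ → ℕ, ∀ i, ∀ᶠ n in atTop, f i n ≤ g n := by
  by_contra hf
  simp only [not_exists, not_forall] at hf
  have : boundingNumber ≤ #(range f) :=
    csInf_le' ⟨range f, rfl, fun g => by
      obtain ⟨i, hi⟩ := hf g
      exact ⟨f i, mem_range_self i, hi⟩⟩
  exact (this.trans mk_range_le).not_gt hι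

theorem aleph0_le_boundingNumber : ℵ₀ ≤ boundingNumber := by
  obtain ⟨B, hB, hunbdd⟩ := exists_unbounded_mk_eq_boundingNumber
  by_contra! hlt
  have hfin : B.Finite := lt_aleph0_iff_set_finite.1 (hB ▸ hlt)
  obtain ⟨f, hf, hne⟩ := hunbdd fun n => hfin.toFinset.sup fun f => f n
  exact hne (.of_forall fun n => Finset.le_sup (f := fun f => f n) (hfin.mem_toFinset.2 hf))

theorem exists_isTopologicalBasis_mk_eq_weight' (X : Type) [TopologicalSpace X] :
    ∃ B : Set (Set X), #B = weight' X ∧ IsTopologicalBasis B :=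
  csInf_mem (s := {c | ∃ B : Set (Set X), #B = c ∧ IsTopologicalBasis B})
    ⟨_, {s | IsOpen s}, rfl, isTopologicalBasis_opens⟩

theorem exists_finite_subsets_eventually_of_mk_lt_boundingNumber {α ι : Type}
    {N : ℕ → Set α} (hN : ∀ n, (N n).Countable) (hι : #ι < boundingNumber)
    {P : ι → ℕ → α → Prop} (hP : ∀ i n, ∃ a ∈ N n, P i n a) :
    ∃ F : ℕ → Set α, (∀ n, F n ⊆ N n ∧ (F n).Finite) ∧
      ∀ i, ∀ᶠ n in atTop, ∃ a ∈ F n, P i n a := by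
  have : ∀ n, Countable (N n) := fun n => (hN n).to_subtype
  choose e he using fun n => Countable.exists_injective_nat (N n)
  choose a haN haP using hP
  obtain ⟨g, hg⟩ := exists_eventually_le_of_mk_lt_boundingNumber
    (fun i n => e n ⟨a i n, haN i n⟩) hι
  refine ⟨fun n => Subtype.val '' (e n ⁻¹' Iic (g n)), fun n => ⟨?_, ?_⟩, fun i => ?_⟩
  · exact image_subset_iff.2 fun A _ => A.2
  · exact ((finite_Iic _).preimage (he n).injOn).image _
  · filter_upwards [hg i] with n hn
    exact ⟨a i n, ⟨_, hn, rfl⟩, haP i n⟩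

theorem HNwSelective.of_mk_lt_boundingNumber {X : Type} [TopologicalSpace X]
    (hnw : HasCountableNetwork X) (hw : weight' X < boundingNumber)
    (hX : #X < boundingNumber) : HNwSelective X := by
  refine ⟨hnw, fun N hN => ?_⟩
  obtain ⟨𝔅, h𝔅, hbasis⟩ := exists_isTopologicalBasis_mk_eq_weight' X
  let I : Set (X × Set X) := {p | p.1 ∈ p.2 ∧ p.2 ∈ 𝔅}
  have hI : #I < boundingNumber := by
    calc #I ≤ #(Set.univ ×ˢ 𝔅 : Set (X × Set X)) :=
          mk_le_mk_of_subset fun p hp => ⟨trivial, hp.2⟩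
      _ = #X * #𝔅 := by rw [mk_setProd, mk_univ]
      _ < boundingNumber := mul_lt_of_lt aleph0_le_boundingNumber hX (h𝔅 ▸ hw)
  obtain ⟨F, hF, hsel⟩ := exists_finite_subsets_eventually_of_mk_lt_boundingNumber
    (fun n => (hN n).1) hI (P := fun p _ A => p.1.1 ∈ A ∧ A ⊆ p.1.2)
    fun p n => (hN n).2 _ _ (hbasis.isOpen p.2.2) p.2.1
  refine ⟨F, hF, fun x U hU hxU => ?_⟩
  obtain ⟨B, hB, hxB, hBU⟩ := hbasis.exists_subset_of_mem_open hxU hU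
  obtain ⟨k, hk⟩ := eventually_atTop.1 (hsel ⟨(x, B), hxB, hB⟩)
  exact ⟨k, fun n hn => (hk n hn).imp fun A ⟨hA, hxA, hAB⟩ => ⟨hA, hxA, hAB.trans hBU⟩⟩

theorem HNwSelective.exists_eventually_le_of_injective {X ι : Type} [TopologicalSpace X]
    (hX : HNwSelective X) {φ : ι → X} (hφ : φ.Injective) (f : ι → ℕ → ℕ) :
    ∃ g : ℕ → ℕ, ∀ i, ∀ᶠ n in atTop, f i n ≤ g n := by
  obtain ⟨⟨M, hMc, hM⟩, hsel⟩ := hX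
  let S : ℕ → ℕ → Set X := fun n j => φ '' {i | j ≤ f i n}
  have hS_anti : ∀ n, Antitone (S n) := fun n j j' hjj' =>
    image_mono fun i hi => hjj'.trans hi
  have hS_miss : ∀ n x, ∃ j, x ∉ S n j := by
    intro n x
    by_cases hx : x ∈ range φ
    · obtain ⟨i, rfl⟩ := hx
      refine ⟨f i n + 1, fun ⟨i', hi', hii'⟩ => ?_⟩
      cases hφ hii'
      exact (Nat.lt_succ_self _).not_ge hi'
    · exact ⟨0, fun hxS => hx (image_subset_range _ _ hxS)⟩
  let N : ℕ → Set (Set X) := fun n => ⋃ j, (· \ S n j) '' M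
  have hN : ∀ n, (N n).Countable ∧ IsNetwork X (N n) := fun n =>
    ⟨countable_iUnion fun j => hMc.image _, fun x U hU hxU => by
      obtain ⟨A, hA, hxA, hAU⟩ := hM x U hU hxU
      obtain ⟨j, hj⟩ := hS_miss n x
      exact ⟨A \ S n j, mem_iUnion.2 ⟨j, A, hA, rfl⟩, ⟨hxA, hj⟩, sdiff_subset.trans hAU⟩⟩
  obtain ⟨F, hF, hcover⟩ := hsel N hN
  have hmiss : ∀ n, ∃ j, ∀ A ∈ F n, Disjoint A (S n j) := fun n =>
    ((hF n).2.eventually_all.2 fun A hA => by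
      obtain ⟨j, B, -, rfl⟩ := mem_iUnion.1 ((hF n).1 hA)
      filter_upwards [eventually_ge_atTop j] with j' hj'
      exact disjoint_sdiff_left.mono_right (hS_anti n hj')).exists (f := atTop)
  choose g hg using hmiss
  refine ⟨g, fun i => ?_⟩
  obtain ⟨k, hk⟩ := hcover (φ i) univ isOpen_univ (mem_univ _)
  filter_upwards [eventually_ge_atTop k] with n hn
  obtain ⟨A, hA, hiA, -⟩ := hk n hn
  by_contra! hlt
  exact disjoint_left.1 (hg n A hA) hiA ⟨i, hlt.le, rfl⟩

theorem HNwSelective.mk_lt_boundingNumber {X : Type} [TopologicalSpace X]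
    (hX : HNwSelective X) : #X < boundingNumber := by
  by_contra! hle
  obtain ⟨B, hB, hunbdd⟩ := exists_unbounded_mk_eq_boundingNumber
  obtain ⟨φ⟩ := (hB ▸ hle : #B ≤ #X)
  obtain ⟨g, hg⟩ := hX.exists_eventually_le_of_injective φ.injective Subtype.val
  obtain ⟨f, hf, hfg⟩ := hunbdd g
  exact hfg (hg ⟨f, hf⟩)

theorem stmt7 (X : Type) [TopologicalSpace X]
    (h1 : HasCountableNetwork X)
    (h3 : weight' X < boundingNumber) :
    HNwSelective X ↔ Cardinal.mk X < boundingNumber :=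
  ⟨HNwSelective.mk_lt_boundingNumber, HNwSelective.of_mk_lt_boundingNumber h1 h3⟩
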